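/- Let P be a graded poset of rank n with 0̂. Then P is near-Eulerian if and only if the semisuspension Σ̃P is the boundary of an Eulerian poset, i.e. if and only if the poset Σ̃P ∪ {1̂} obtained by adjoining a maximal element to Σ̃P is Eulerian. -/

import Mathlib

/-!
Removing `1̂` and a coatom `q` from an Eulerian poset `Q` of rank `n + 1` leaves `P`, and `Q` is
rebuilt from `P` as `Σ̃P ∪ {1̂}` exactly when the elements of `P` below `q` are `0̂` and the ideal
`∂P`. This is where the Eulerian condition enters: every interval of length two in `Q` has exactly
two interior elements, so an element `w` of rank `n - 1` has exactly two upper covers in `Q`,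
neither of them `1̂`. Hence `w` has a unique upper cover in `P` iff one of its two covers is `q`,
i.e. iff `w < q`; and every element strictly below `q` lies below such a `w`.
-/

open scoped Classical

noncomputable section

namespace CDIndex

variable {α β : Type}

/-- The natural rank function of a graded poset: `rho x` is one less than the largest
cardinality of a chain contained in `Set.Iic x` (i.e. the length of a maximal chain of
the interval `[0̂, x]`). -/
def rho [PartialOrder α] (x : α) : ℕ :=
  sSup {k : ℕ | ∃ s : Finset α,
    IsChain (· ≤ ·) (s : Set α) ∧ (s : Set α) ⊆ Set.Iic x ∧ s.card = k + 1}

/-- A subset `S` of a poset is graded of rank `n` if every maximal chain of `S`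
has exactly `n + 1` elements (i.e. length `n`). -/
def IsGradedSetOfRank [PartialOrder α] (S : Set α) (n : ℕ) : Prop :=
  ∀ s : Finset α, (s : Set α) ⊆ S → IsChain (· ≤ ·) (s : Set α) →
    (∀ t : Finset α, (t : Set α) ⊆ S → IsChain (· ≤ ·) (t : Set α) → s ⊆ t → s = t) →
    s.card = n + 1

/-- A poset is graded of rank `n` if every maximal chain has length `n`. -/
def IsGradedOfRank (α : Type) [PartialOrder α] (n : ℕ) : Prop :=
  IsGradedSetOfRank (Set.univ : Set α) n

/-- Every interval `[s, t]` with `s < t`, `s, t ∈ S`, has equally many elements of even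
rank and of odd rank. -/
def BalancedIntervalsIn [PartialOrder α] (S : Set α) : Prop :=
  ∀ s ∈ S, ∀ t ∈ S, s < t →
    {y ∈ Set.Icc s t | Even (rho y)}.ncard = {y ∈ Set.Icc s t | Odd (rho y)}.ncard

/-- An Eulerian poset of rank `n`: a graded poset with `0̂` and `1̂` in which every
interval of positive length has equally many elements of each parity of rank. -/
def IsEulerianOfRank (α : Type) [PartialOrder α] (n : ℕ) : Prop :=
  (∃ b : α, ∀ z, b ≤ z) ∧ (∃ t : α, ∀ z, z ≤ t) ∧
    IsGradedOfRank α n ∧ BalancedIntervalsIn (Set.univ : Set α)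

/-- A lower Eulerian poset of rank `n`: a graded poset with `0̂` all of whose intervals
are Eulerian. -/
def IsLowerEulerianOfRank (α : Type) [PartialOrder α] (n : ℕ) : Prop :=
  (∃ b : α, ∀ z, b ≤ z) ∧ IsGradedOfRank α n ∧ BalancedIntervalsIn (Set.univ : Set α)

/-- A lower order ideal `S` (of a poset) which is lower Eulerian of rank `n`. -/
def IsLowerEulerianSetOfRank [PartialOrder α] (S : Set α) (n : ℕ) : Prop :=
  IsGradedSetOfRank S n ∧ BalancedIntervalsIn S

/-- The boundary of (a lower order ideal `S` of) a graded poset of rank `n`: the lower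
order ideal generated by the rank `n - 1` elements which are covered by exactly one
element. -/
def boundaryIn [PartialOrder α] (S : Set α) (n : ℕ) : Set α :=
  {y | y ∈ S ∧ ∃ x ∈ S, rho x = n - 1 ∧ {z ∈ S | x ⋖ z}.ncard = 1 ∧ y ≤ x}

/-- The boundary `∂P` of a graded poset of rank `n`. -/
def boundary (α : Type) [PartialOrder α] (n : ℕ) : Set α :=
  boundaryIn (Set.univ : Set α) n

/-- `α` is a near-Eulerian poset of rank `n`: it is obtained from an Eulerian poset `Q`
of rank `n + 1` by removing the maximal element and one element `q` of rank `n`. -/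
def IsNearEulerianOfRank (α : Type) [PartialOrder α] [Finite α] (n : ℕ) : Prop :=
  ∃ (Q : Type) (_ : PartialOrder Q) (_ : Finite Q) (q top : Q),
    IsEulerianOfRank Q (n + 1) ∧ (∀ z, z ≤ top) ∧ rho q = n ∧ q ≠ top ∧
    Nonempty (α ≃o {x : Q // x ≠ q ∧ x ≠ top})

/-- `α` is (isomorphic to) the boundary of an Eulerian poset, where `α` has rank `n`
(so the Eulerian poset has rank `n + 1`). -/
def IsBoundaryOfEulerianOfRank (α : Type) [PartialOrder α] [Finite α] (n : ℕ) : Prop :=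
  ∃ (Q : Type) (_ : PartialOrder Q) (_ : Finite Q) (top : Q),
    IsEulerianOfRank Q (n + 1) ∧ (∀ z, z ≤ top) ∧
    Nonempty (α ≃o {x : Q // x ≠ top})

/-! ### The semisuspension -/

/-- The semisuspension of `α` relative to a set `S` (intended: `S = ∂α`): the poset `α`
together with one new element `q` lying above `0̂` and above every element of `S`. -/
@[ext] structure Semisusp (α : Type) (S : Set α) : Type where
  toOpt : Option α

namespace Semisusp

variable {S : Set α}

/-- The new vertex `q` of the semisuspension. -/
def q : Semisusp α S := ⟨none⟩

/-- The inclusion of `α` into its semisuspension. -/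
def incl (a : α) : Semisusp α S := ⟨some a⟩

instance instPartialOrder [PartialOrder α] [OrderBot α] : PartialOrder (Semisusp α S) where
  le x y := match x, y with
    | ⟨some a⟩, ⟨some b⟩ => a ≤ b
    | ⟨some a⟩, ⟨none⟩ => a = ⊥ ∨ ∃ s ∈ S, a ≤ s
    | ⟨none⟩, ⟨some _⟩ => False
    | ⟨none⟩, ⟨none⟩ => True
  le_refl x := by rcases x with ⟨_ | a⟩ <;> simp
  le_trans x y z hxy hyz := by
    rcases x with ⟨_ | a⟩ <;> rcases y with ⟨_ | b⟩ <;> rcases z with ⟨_ | c⟩ <;>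
      simp_all
    · rcases hyz with h | ⟨s, hs, hbs⟩
      · subst h
        exact Or.inl (le_bot_iff.mp hxy)
      · exact Or.inr ⟨s, hs, le_trans hxy hbs⟩
    · exact le_trans hxy hyz
  le_antisymm x y hxy hyx := by
    rcases x with ⟨_ | a⟩ <;> rcases y with ⟨_ | b⟩ <;> simp_all
    exact le_antisymm hxy hyx

instance [PartialOrder α] [OrderBot α] : OrderBot (Semisusp α S) where
  bot := ⟨some ⊥⟩
  bot_le x := by
    rcases x with ⟨_ | a⟩
    · exact Or.inl rfl
    · show (⊥ : α) ≤ a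
      exact bot_le

def equivOption : Semisusp α S ≃ Option α where
  toFun := toOpt
  invFun := mk
  left_inv _ := rfl
  right_inv _ := rfl

instance [Finite α] : Finite (Semisusp α S) := by
  have := Fintype.ofFinite α
  exact Finite.of_equiv (Option α) (equivOption (S := S)).symm

end Semisusp

section Graded

variable {β : Type} [PartialOrder β] {n : ℕ}

/-- `rho x` is definitionally `sSup (chainLengthsIic x)`. -/
def chainLengthsIic (x : β) : Set ℕ :=
  {k | ∃ s : Finset β, IsChain (· ≤ ·) (s : Set β) ∧ (s : Set β) ⊆ Set.Iic x ∧ s.card = k + 1}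

lemma zero_mem_chainLengthsIic (x : β) : 0 ∈ chainLengthsIic x :=
  ⟨{x}, by simp, by simp, rfl⟩

lemma exists_isMaxChain_finset [Finite β] {s : Set β} (hs : IsChain (· ≤ ·) s) :
    ∃ t : Finset β, s ⊆ t ∧ IsMaxChain (· ≤ ·) (t : Set β) := by
  obtain ⟨M, hM, hsM⟩ := hs.exists_maxChain
  exact ⟨M.toFinite.toFinset, by simpa using hsM, by simpa using hM⟩

namespace IsGradedOfRank

lemma card_eq (h : IsGradedOfRank β n) {t : Finset β} (ht : IsMaxChain (· ≤ ·) (t : Set β)) :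
    t.card = n + 1 :=
  h t (Set.subset_univ _) ht.1 fun _ _ hu htu => Finset.coe_injective (ht.2 hu htu)

variable [Finite β]

lemma card_le (h : IsGradedOfRank β n) {s : Finset β} (hs : IsChain (· ≤ ·) (s : Set β)) :
    s.card ≤ n + 1 := by
  obtain ⟨t, hst, ht⟩ := exists_isMaxChain_finset hs
  exact (Finset.card_le_card (Finset.coe_subset.1 hst)).trans (h.card_eq ht).le

lemma forall_mem_chainLengthsIic_le (h : IsGradedOfRank β n) (x : β) :
    ∀ k ∈ chainLengthsIic x, k ≤ n := by
  rintro k ⟨s, hs, -, hk⟩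
  have := h.card_le hs
  omega

lemma rho_le (h : IsGradedOfRank β n) (x : β) : rho x ≤ n :=
  csSup_le ⟨0, zero_mem_chainLengthsIic x⟩ (h.forall_mem_chainLengthsIic_le x)

lemma rho_strictMono (h : IsGradedOfRank β n) : StrictMono (rho : β → ℕ) := by
  intro x y hxy
  have hbdd : BddAbove (chainLengthsIic y) := ⟨n, h.forall_mem_chainLengthsIic_le y⟩
  obtain ⟨s, hs, hsx, hcard⟩ : rho x ∈ chainLengthsIic x :=
    Nat.sSup_mem ⟨0, zero_mem_chainLengthsIic x⟩ ⟨n, h.forall_mem_chainLengthsIic_le x⟩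
  have hys : y ∉ s := fun hy => (hsx hy).not_gt hxy
  have hsucc : rho x + 1 ∈ chainLengthsIic y := by
    refine ⟨insert y s, ?_, ?_, by rw [Finset.card_insert_of_notMem hys, hcard]⟩
    · rw [Finset.coe_insert]
      exact hs.insert fun b hb _ => Or.inr ((hsx hb).trans hxy.le)
    · rw [Finset.coe_insert]
      exact Set.insert_subset le_rfl (hsx.trans (Set.Iic_subset_Iic.2 hxy.le))
  exact Nat.lt_of_succ_le (le_csSup hbdd hsucc)

lemma image_rho_eq_range (h : IsGradedOfRank β n) {t : Finset β}
    (ht : IsMaxChain (· ≤ ·) (t : Set β)) : t.image rho = Finset.range (n + 1) := by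
  have hinj : Set.InjOn rho (t : Set β) := by
    intro a ha b hb hab
    by_contra hne
    rcases ht.1 ha hb hne with hle | hle
    · exact (h.rho_strictMono (hle.lt_of_ne hne)).ne hab
    · exact (h.rho_strictMono (hle.lt_of_ne (Ne.symm hne))).ne' hab
  refine Finset.eq_of_subset_of_card_le (fun k hk => ?_) ?_
  · obtain ⟨a, -, rfl⟩ := Finset.mem_image.1 hk
    exact Finset.mem_range.2 (Nat.lt_succ_of_le (h.rho_le a))
  · rw [Finset.card_range, Finset.card_image_of_injOn hinj, h.card_eq ht]

lemma exists_rho_eq_of_le (h : IsGradedOfRank β n) {x y : β} (hxy : x ≤ y) {k : ℕ}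
    (hxk : rho x ≤ k) (hky : k ≤ rho y) : ∃ z, x ≤ z ∧ z ≤ y ∧ rho z = k := by
  obtain ⟨t, hxyt, ht⟩ := exists_isMaxChain_finset (IsChain.pair hxy)
  have hk : k ∈ t.image rho := by
    rw [h.image_rho_eq_range ht, Finset.mem_range]
    have := h.rho_le y
    omega
  obtain ⟨z, hzt, rfl⟩ := Finset.mem_image.1 hk
  have le_of_rho_le : ∀ a ∈ (t : Set β), ∀ b ∈ (t : Set β), rho a ≤ rho b → a ≤ b := by
    intro a ha b hb hab
    obtain rfl | hne := eq_or_ne a b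
    · exact le_rfl
    · exact (ht.1 ha hb hne).resolve_right fun hba =>
        (h.rho_strictMono (hba.lt_of_ne hne.symm)).not_ge hab
  exact ⟨z, le_of_rho_le x (hxyt (by simp)) z hzt hxk,
    le_of_rho_le z hzt y (hxyt (by simp)) hky, rfl⟩

lemma covBy_iff (h : IsGradedOfRank β n) {x y : β} : x ⋖ y ↔ x < y ∧ rho y = rho x + 1 := by
  refine ⟨fun hxy => ⟨hxy.lt, ?_⟩, fun ⟨hxy, hr⟩ => ⟨hxy, fun z hxz hzy => ?_⟩⟩
  · have hlt := h.rho_strictMono hxy.lt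
    by_contra hne
    obtain ⟨z, hxz, hzy, hz⟩ := h.exists_rho_eq_of_le hxy.le (k := rho x + 1) (Nat.le_succ _)
      (by omega)
    exact hxy.2 (hxz.lt_of_ne (by rintro rfl; omega)) (hzy.lt_of_ne (by rintro rfl; omega))
  · have := h.rho_strictMono hxz
    have := h.rho_strictMono hzy
    omega

lemma exists_le_covBy (h : IsGradedOfRank β n) {x y : β} (hxy : x < y) :
    ∃ z, x ≤ z ∧ z ⋖ y := by
  have hr := h.rho_strictMono hxy
  obtain ⟨z, hxz, hzy, hz⟩ := h.exists_rho_eq_of_le hxy.le (k := rho y - 1) (by omega) (by omega)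
  exact ⟨z, hxz, h.covBy_iff.2 ⟨hzy.lt_of_ne (by rintro rfl; omega), by omega⟩⟩

lemma rho_eq_of_forall_le (h : IsGradedOfRank β n) {top : β} (htop : ∀ z, z ≤ top) :
    rho top = n := by
  obtain ⟨t, -, ht⟩ := exists_isMaxChain_finset (s := (∅ : Set β)) Set.subsingleton_empty.isChain
  obtain ⟨z, -, hz⟩ := Finset.mem_image.1
    (show n ∈ t.image rho by simp [h.image_rho_eq_range ht])
  exact le_antisymm (h.rho_le top) (hz ▸ h.rho_strictMono.monotone (htop z))

lemma eq_of_lt_of_rho_eq (h : IsGradedOfRank β (n + 1)) {top q x : β} (htop : ∀ z, z ≤ top)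
    (hq : rho q = n) (hqx : q < x) : x = top := by
  by_contra hne
  have := h.rho_strictMono hqx
  have := h.rho_strictMono ((htop x).lt_of_ne hne)
  have := h.rho_eq_of_forall_le htop
  omega

end IsGradedOfRank

end Graded

section Eulerian

variable {β : Type} [PartialOrder β] [Finite β] {n : ℕ}

lemma ncard_Ioo_eq_two (h : IsGradedOfRank β n) (hbal : BalancedIntervalsIn (Set.univ : Set β))
    {y z : β} (hyz : y < z) (hr : rho z = rho y + 2) : (Set.Ioo y z).ncard = 2 := by
  have hsplit : ∀ w ∈ Set.Icc y z, (Even (rho w) ↔ Even (rho y)) ↔ w = y ∨ w = z := by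
    rintro w ⟨hyw, hwz⟩
    obtain rfl | hyw := hyw.eq_or_lt
    · simp
    obtain rfl | hwz := hwz.eq_or_lt
    · simp [hr, Nat.even_add]
    have := h.rho_strictMono hyw
    have := h.rho_strictMono hwz
    rw [show rho w = rho y + 1 by omega, Nat.even_add_one]
    simp only [hyw.ne', hwz.ne, or_self, iff_false]
    tauto
  have hpair : {w ∈ Set.Icc y z | Even (rho w) ↔ Even (rho y)} = {y, z} := by
    ext w
    refine ⟨fun ⟨hw, hp⟩ => (hsplit w hw).1 hp, fun hw => ?_⟩
    have hwI : w ∈ Set.Icc y z := by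
      rcases hw with rfl | rfl
      exacts [Set.left_mem_Icc.2 hyz.le, Set.right_mem_Icc.2 hyz.le]
    exact ⟨hwI, (hsplit w hwI).2 hw⟩
  have hIoo : Set.Ioo y z = {w ∈ Set.Icc y z | ¬(Even (rho w) ↔ Even (rho y))} := by
    ext w
    refine ⟨fun hw => ⟨Set.Ioo_subset_Icc_self hw, ?_⟩, fun ⟨hw, hp⟩ => ?_⟩
    · rw [hsplit w (Set.Ioo_subset_Icc_self hw)]
      rintro (rfl | rfl)
      exacts [hw.1.false, hw.2.false]
    · rw [hsplit w hw, not_or] at hp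
      exact ⟨hw.1.lt_of_ne (Ne.symm hp.1), hw.2.lt_of_ne hp.2⟩
  have hbal' : {w ∈ Set.Icc y z | Even (rho w) ↔ Even (rho y)}.ncard =
      {w ∈ Set.Icc y z | ¬(Even (rho w) ↔ Even (rho y))}.ncard := by
    have := hbal y trivial z trivial hyz
    by_cases hy : Even (rho y)
    · simpa [hy] using this
    · simpa [hy] using this.symm
  rw [hIoo, ← hbal', hpair, Set.ncard_pair hyz.ne]

lemma ncard_covBy_eq_two (h : IsGradedOfRank β n) (hbal : BalancedIntervalsIn (Set.univ : Set β))
    {top y : β} (htop : ∀ z, z ≤ top) (hy : rho y + 2 = n) : {z | y ⋖ z}.ncard = 2 := by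
  have hrtop := h.rho_eq_of_forall_le htop
  have hyt : y < top := (htop y).lt_of_ne (by rintro rfl; omega)
  have hcov : {z | y ⋖ z} = Set.Ioo y top := by
    ext z
    rw [Set.mem_ofPred_eq, h.covBy_iff]
    refine ⟨fun ⟨hyz, hr⟩ => ⟨hyz, (htop z).lt_of_ne (by rintro rfl; omega)⟩,
      fun ⟨hyz, hzt⟩ => ⟨hyz, ?_⟩⟩
    have := h.rho_strictMono hyz
    have := h.rho_strictMono hzt
    omega
  rw [hcov]
  exact ncard_Ioo_eq_two h hbal hyt (by omega)

lemma ncard_covBy_eq_one_iff_lt (h : IsGradedOfRank β (n + 2))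
    (hbal : BalancedIntervalsIn (Set.univ : Set β)) {top q y : β} (htop : ∀ z, z ≤ top)
    (hq : rho q = n + 1) (hy : rho y = n) :
    {z | (z ≠ q ∧ z ≠ top) ∧ y ⋖ z}.ncard = 1 ↔ y < q := by
  have hcov := ncard_covBy_eq_two h hbal (y := y) htop (by omega)
  have hdiff : {z | (z ≠ q ∧ z ≠ top) ∧ y ⋖ z} = {z | y ⋖ z} \ {q} := by
    ext z
    simp only [Set.mem_ofPred_eq, Set.mem_sdiff, Set.mem_singleton_iff]
    refine ⟨fun ⟨⟨hzq, _⟩, hyz⟩ => ⟨hyz, hzq⟩, fun ⟨hyz, hzq⟩ => ⟨⟨hzq, ?_⟩, hyz⟩⟩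
    rintro rfl
    have := (h.covBy_iff.1 hyz).2
    rw [h.rho_eq_of_forall_le htop] at this
    omega
  rw [hdiff]
  by_cases hyq : y < q
  · have hq' : q ∈ {z | y ⋖ z} := h.covBy_iff.2 ⟨hyq, by omega⟩
    rw [Set.ncard_sdiff_singleton_of_mem hq', hcov]
    exact iff_of_true rfl hyq
  · have hq' : q ∉ {z | y ⋖ z} := fun hyq' => hyq (hyq' : y ⋖ q).lt
    rw [Set.sdiff_singleton_eq_self hq', hcov]
    exact iff_of_false (by norm_num) hyq

end Eulerian

section Transfer

variable {β γ : Type} [PartialOrder β] [PartialOrder γ] {n : ℕ}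

lemma isGradedOfRank_iff_forall_isMaxChain [Finite β] :
    IsGradedOfRank β n ↔ ∀ t : Finset β, IsMaxChain (· ≤ ·) (t : Set β) → t.card = n + 1 := by
  refine ⟨fun h t ht => h.card_eq ht, fun H s _ hs hmax => H s ⟨hs, fun u hu hsu => ?_⟩⟩
  have := hmax u.toFinite.toFinset (by simp) (by simpa using hu) (by simpa using hsu)
  simpa using congrArg (fun t : Finset β => (t : Set β)) this

lemma rho_apply_of_isLowerSet_range (f : β ↪o γ) (hf : IsLowerSet (Set.range f)) (x : β) :
    rho (f x) = rho x := by
  change sSup (chainLengthsIic (f x)) = sSup (chainLengthsIic x)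
  congr 1
  ext k
  constructor
  · rintro ⟨s, hs, hsx, hk⟩
    have hsf : ∀ c ∈ s, c ∈ Set.range f := fun c hc => hf (hsx hc) (Set.mem_range_self x)
    refine ⟨s.preimage f f.injective.injOn, ?_, fun a ha => ?_, ?_⟩
    · rw [Finset.coe_preimage]
      exact hs.preimage_embedding f
    · exact f.le_iff_le.1 (hsx (Finset.mem_preimage.1 ha))
    · rw [Finset.card_preimage, Finset.filter_true_of_mem hsf, hk]
  · rintro ⟨s, hs, hsx, hk⟩
    refine ⟨s.map f.toEmbedding, ?_, ?_, by rw [Finset.card_map, hk]⟩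
    · rw [Finset.coe_map]
      exact hs.image f
    · rw [Finset.coe_map]
      rintro _ ⟨a, ha, rfl⟩
      exact f.monotone (hsx ha)

lemma rho_orderIso (e : β ≃o γ) (x : β) : rho (e x) = rho x :=
  rho_apply_of_isLowerSet_range e.toOrderEmbedding (by simp [isLowerSet_univ]) x

lemma ncard_covBy_apply_of_isLowerSet_range (f : β ↪o γ) (hf : IsLowerSet (Set.range f))
    (x : β) : {z | z ∈ Set.range f ∧ f x ⋖ z}.ncard = {z | x ⋖ z}.ncard := by
  have hcov : ∀ y, f x ⋖ f y ↔ x ⋖ y := fun y => hf.ordConnected.apply_covBy_apply_iff f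
  have himage : {z | z ∈ Set.range f ∧ f x ⋖ z} = f '' {z | x ⋖ z} := by
    ext z
    constructor
    · rintro ⟨⟨y, rfl⟩, hxy⟩
      exact ⟨y, (hcov y).1 hxy, rfl⟩
    · rintro ⟨y, hxy, rfl⟩
      exact ⟨⟨y, rfl⟩, (hcov y).2 hxy⟩
  rw [himage, Set.ncard_image_of_injective _ f.injective]

lemma IsGradedOfRank.orderIso [Finite β] (h : IsGradedOfRank β n) (e : β ≃o γ) :
    IsGradedOfRank γ n := by
  have : Finite γ := Finite.of_equiv β e.toEquiv
  rw [isGradedOfRank_iff_forall_isMaxChain] at h ⊢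
  intro t ht
  have := h (t.image e.symm) (by rw [Finset.coe_image]; exact ht.image e.symm)
  rwa [Finset.card_image_of_injective _ e.symm.injective] at this

lemma BalancedIntervalsIn.orderIso (hbal : BalancedIntervalsIn (Set.univ : Set β)) (e : β ≃o γ) :
    BalancedIntervalsIn (Set.univ : Set γ) := by
  intro s _ t _ hst
  have hpull : ∀ p : ℕ → Prop, e.symm '' {y ∈ Set.Icc s t | p (rho y)} =
      {x ∈ Set.Icc (e.symm s) (e.symm t) | p (rho x)} := by
    intro p
    ext x
    simp [e.symm.image_eq_preimage_symm, rho_orderIso, e.symm_apply_le, e.le_symm_apply]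
  rw [← Set.ncard_image_of_injective _ e.symm.injective, hpull,
    ← Set.ncard_image_of_injective {y ∈ Set.Icc s t | Odd (rho y)} e.symm.injective, hpull]
  exact hbal _ trivial _ trivial (e.symm.lt_iff_lt.2 hst)

lemma IsEulerianOfRank.orderIso [Finite β] (h : IsEulerianOfRank β n) (e : β ≃o γ) :
    IsEulerianOfRank γ n := by
  obtain ⟨⟨b, hb⟩, ⟨t, ht⟩, hg, hbal⟩ := h
  refine ⟨⟨e b, fun z => ?_⟩, ⟨e t, fun z => ?_⟩, hg.orderIso e, hbal.orderIso e⟩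
  · simpa using e.monotone (hb (e.symm z))
  · simpa using e.monotone (ht (e.symm z))

end Transfer

namespace Semisusp

variable {S : Set α}

lemma withTop_cases (x : WithTop (Semisusp α S)) :
    x = ⊤ ∨ x = ↑(q : Semisusp α S) ∨ ∃ a, x = ↑(incl a : Semisusp α S) := by
  rcases x with _ | ⟨_ | a⟩
  exacts [Or.inl rfl, Or.inr (Or.inl rfl), Or.inr (Or.inr ⟨a, rfl⟩)]

variable [PartialOrder α] [OrderBot α]

lemma incl_le_incl_iff {a b : α} : (incl a : Semisusp α S) ≤ incl b ↔ a ≤ b := Iff.rfl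

lemma incl_le_q_iff {a : α} : (incl a : Semisusp α S) ≤ q ↔ a = ⊥ ∨ ∃ s ∈ S, a ≤ s := Iff.rfl

lemma not_q_le_incl {a : α} : ¬(q : Semisusp α S) ≤ incl a := id

def orderIsoCompl : α ≃o {x : WithTop (Semisusp α S) // x ≠ ↑(q : Semisusp α S) ∧ x ≠ ⊤} :=
  OrderIso.ofSurjective
    (OrderEmbedding.ofMapLEIff (fun a => ⟨↑(incl a : Semisusp α S), by simp [incl, q]⟩)
      fun _ _ => WithTop.coe_le_coe)
    (by
      rintro ⟨x, hxq, hxt⟩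
      rcases withTop_cases x with rfl | rfl | ⟨a, rfl⟩
      exacts [(hxt rfl).elim, (hxq rfl).elim, ⟨a, rfl⟩])

def withTopOrderIso {Q : Type} [PartialOrder Q] {c top : Q}
    (e : α ≃o {x : Q // x ≠ c ∧ x ≠ top}) (htop : ∀ z, z ≤ top) (hct : c ≠ top)
    (habove : ∀ x, c < x → x = top) (hle : ∀ a, (e a : Q) ≤ c ↔ a = ⊥ ∨ ∃ s ∈ S, a ≤ s) :
    WithTop (Semisusp α S) ≃o Q :=
  let f : WithTop (Semisusp α S) → Q :=
    fun x => WithTop.recTopCoe top (fun s => Option.elim s.toOpt c fun a => (e a : Q)) x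
  OrderIso.ofSurjective
    (OrderEmbedding.ofMapLEIff f (by
      intro x y
      rcases withTop_cases x with rfl | rfl | ⟨a, rfl⟩ <;>
        rcases withTop_cases y with rfl | rfl | ⟨b, rfl⟩
      · exact iff_of_true le_rfl le_rfl
      · exact iff_of_false (fun h => hct (le_antisymm (htop c) h)) (by simp)
      · exact iff_of_false (fun h => (e b).2.2 (le_antisymm (htop _) h)) (by simp)
      · exact iff_of_true (htop c) le_top
      · exact iff_of_true le_rfl le_rfl
      · exact iff_of_false (fun h => (e b).2.2 (habove _ (h.lt_of_ne (e b).2.1.symm)))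
          (WithTop.coe_le_coe.not.2 not_q_le_incl)
      · exact iff_of_true (htop _) le_top
      · exact (hle a).trans (WithTop.coe_le_coe.trans incl_le_q_iff).symm
      · exact e.le_iff_le.trans (WithTop.coe_le_coe.trans incl_le_incl_iff).symm))
    (by
      intro x
      by_cases hxt : x = top
      · exact ⟨⊤, hxt.symm⟩
      by_cases hxc : x = c
      · exact ⟨↑(q : Semisusp α S), hxc.symm⟩
      exact ⟨↑(incl (e.symm ⟨x, hxc, hxt⟩) : Semisusp α S), by simp [f, incl]⟩)

lemma coe_q_covBy_top : ((q : Semisusp α S) : WithTop (Semisusp α S)) ⋖ ⊤ := by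
  refine ⟨WithTop.coe_lt_top _, fun z hqz hzt => ?_⟩
  rcases withTop_cases z with rfl | rfl | ⟨a, rfl⟩
  exacts [hzt.false, hqz.false, not_q_le_incl (WithTop.coe_lt_coe.1 hqz).le]

lemma isNearEulerianOfRank_of_isEulerianOfRank_withTop [Finite α] {n : ℕ}
    (hE : IsEulerianOfRank (WithTop (Semisusp α S)) (n + 1)) : IsNearEulerianOfRank α n := by
  have hq : rho ((q : Semisusp α S) : WithTop (Semisusp α S)) = n := by
    have hg := hE.2.2.1
    have := (hg.covBy_iff.1 coe_q_covBy_top).2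
    rw [hg.rho_eq_of_forall_le fun _ => le_top] at this
    omega
  exact ⟨_, inferInstance, inferInstance, _, ⊤, hE, fun _ => le_top, hq, WithTop.coe_ne_top,
    ⟨orderIsoCompl⟩⟩

end Semisusp

lemma mem_boundary_iff [PartialOrder α] {n : ℕ} {s : α} :
    s ∈ boundary α n ↔ ∃ w, rho w = n - 1 ∧ {z | w ⋖ z}.ncard = 1 ∧ s ≤ w := by
  simp [boundary, boundaryIn]

lemma coe_orderIso_le_coatom_iff {Q : Type} [PartialOrder Q] [Finite Q] [PartialOrder α]
    [OrderBot α] {n : ℕ} (hg : IsGradedOfRank Q (n + 2))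
    (hbal : BalancedIntervalsIn (Set.univ : Set Q))
    {b q top : Q} (hb : ∀ z, b ≤ z) (htop : ∀ z, z ≤ top) (hq : rho q = n + 1)
    (e : α ≃o {x : Q // x ≠ q ∧ x ≠ top}) (a : α) :
    (e a : Q) ≤ q ↔ a = ⊥ ∨ ∃ s ∈ boundary α (n + 1), a ≤ s := by
  let f : α ↪o Q := e.toOrderEmbedding.trans (OrderEmbedding.subtype _)
  have hrange : Set.range f = {x | x ≠ q ∧ x ≠ top} := by
    simp [f, Set.range_comp, e.surjective.range_eq]
  have hlower : IsLowerSet (Set.range f) := by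
    rw [hrange]
    rintro x y hyx ⟨hxq, hxt⟩
    refine ⟨?_, fun hyt => hxt (le_antisymm (htop x) (hyt ▸ hyx))⟩
    rintro rfl
    exact hxt (hg.eq_of_lt_of_rho_eq htop hq (hyx.lt_of_ne (Ne.symm hxq)))
  have hrho (w : α) : rho (e w : Q) = rho w := rho_apply_of_isLowerSet_range f hlower w
  have hunique (w : α) (hw : rho w = n) : {z | w ⋖ z}.ncard = 1 ↔ (e w : Q) < q := by
    rw [← ncard_covBy_apply_of_isLowerSet_range f hlower, hrange]
    exact ncard_covBy_eq_one_iff_lt hg hbal htop hq ((hrho w).trans hw)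
  constructor
  · intro hle
    obtain ⟨y, hay, hyq⟩ := hg.exists_le_covBy (hle.lt_of_ne (e a).2.1)
    have hy : y ≠ q ∧ y ≠ top := ⟨hyq.ne, (hyq.lt.trans_le (htop q)).ne⟩
    set w := e.symm ⟨y, hy⟩
    have hew : (e w : Q) = y := by simp [w]
    have hw : rho w = n := by
      have := (hg.covBy_iff.1 hyq).2
      rw [← hrho, hew]
      omega
    refine Or.inr ⟨w, mem_boundary_iff.2 ⟨w, hw, (hunique w hw).2 (hew ▸ hyq.lt), le_rfl⟩, ?_⟩
    exact e.le_symm_apply.2 hay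
  · rintro (rfl | ⟨s, hs, has⟩)
    · have hbP : b ∈ {x | x ≠ q ∧ x ≠ top} := hrange ▸ hlower (hb (e ⊥)) ⟨⊥, rfl⟩
      exact (Subtype.coe_le_coe.2 (e.le_symm_apply.1 (bot_le : ⊥ ≤ e.symm ⟨b, hbP⟩))).trans
        (hb q)
    · obtain ⟨w, hw, hw1, hsw⟩ := mem_boundary_iff.1 hs
      exact (Subtype.coe_le_coe.2 (e.monotone (has.trans hsw))).trans ((hunique w hw).1 hw1).le

lemma IsNearEulerianOfRank.isEulerianOfRank_withTop_semisusp [PartialOrder α] [Finite α]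
    [OrderBot α] {n : ℕ} (hN : IsNearEulerianOfRank α n) :
    IsEulerianOfRank (WithTop (Semisusp α (boundary α n))) (n + 1) := by
  obtain ⟨Q, _, _, q, top, ⟨⟨b, hb⟩, -, hg, hbal⟩, htop, hq, hqt, ⟨e⟩⟩ := hN
  have habove (x : Q) : q < x → x = top := hg.eq_of_lt_of_rho_eq htop hq
  have hbq : b ≠ q := by
    rintro rfl
    exact (e ⊥).2.2 (habove _ ((hb _).lt_of_ne (e ⊥).2.1.symm))
  obtain ⟨m, rfl⟩ : ∃ m, n = m + 1 :=
    Nat.exists_eq_succ_of_ne_zero (hq ▸ (hg.rho_strictMono ((hb q).lt_of_ne hbq)).ne_zero)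
  have hle := coe_orderIso_le_coatom_iff hg hbal hb htop hq e
  exact IsEulerianOfRank.orderIso ⟨⟨b, hb⟩, ⟨top, htop⟩, hg, hbal⟩
    (Semisusp.withTopOrderIso e htop hqt habove hle).symm

theorem isNearEulerian_iff_semisusp_boundary_general
    (α : Type) [PartialOrder α] [Finite α] [OrderBot α] (n : ℕ) :
    IsNearEulerianOfRank α n ↔
      IsEulerianOfRank (WithTop (Semisusp α (boundary α n))) (n + 1) :=
  ⟨IsNearEulerianOfRank.isEulerianOfRank_withTop_semisusp,
    Semisusp.isNearEulerianOfRank_of_isEulerianOfRank_withTop⟩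

/-- Let `P` be a graded poset of rank `n` with `0̂`.  Then `P` is
near-Eulerian if and only if the semisuspension `Σ̃P` is the boundary of an Eulerian
poset, i.e. if and only if the poset `Σ̃P ∪ {1̂}` obtained by adjoining a maximal element
to `Σ̃P` is Eulerian (of rank `n + 1`). -/
theorem isNearEulerian_iff_semisusp_boundary
    (α : Type) [PartialOrder α] [Finite α] [OrderBot α] (n : ℕ)
    (h : IsGradedOfRank α n) :
    IsNearEulerianOfRank α n ↔
      IsEulerianOfRank (WithTop (Semisusp α (boundary α n))) (n + 1) :=
  isNearEulerian_iff_semisusp_boundary_general α n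

end CDIndex
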